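/- Rockafellar–Uryasev representation of the superquantile. Let (Ω, 2^Ω, P) be a finite probability space with Ω nonempty and P(ω) > 0 for all ω ∈ Ω, let α ∈ (0,1), and let η : Ω → ℝ. Then S_α(η) = min_{z∈ℝ} [ z + (1/(1−α)) Σ_{ω∈Ω} P(ω)·max{0, η(ω) − z} ], and the minimum on the right-hand side is attained at z = Q_α(η). -/

import Mathlib

open Finset

/-- The `α`-quantile of a random variable on a finite probability space. -/
noncomputable def quantile {Ω : Type} [Fintype Ω] (P : Ω → ℝ) (α : ℝ) (η : Ω → ℝ) : ℝ :=
  sInf {z : ℝ | α ≤ ∑ ω ∈ univ.filter (fun ω => η ω ≤ z), P ω}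

/-- The `α`-superquantile of a random variable on a finite probability space. -/
noncomputable def superquantile {Ω : Type} [Fintype Ω] (P : Ω → ℝ) (α : ℝ) (η : Ω → ℝ) : ℝ :=
  quantile P α η + (1 / (1 - α)) * ∑ ω, P ω * max 0 (η ω - quantile P α η)

/-!
`-P(η ∈ s)` is a subgradient of `z ↦ 𝔼[(η - z)⁺]` at `q` for every event
`{q < η} ⊆ s ⊆ {q ≤ η}`, so the objective `F z = z + (1 - α)⁻¹ 𝔼[(η - z)⁺]` satisfies
`F z - F q ≥ (z - q) (1 - P(s) / (1 - α))`. A quantile `q` satisfies `P(η < q) ≤ α ≤ P(η ≤ q)`,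
so choosing `s = {q < η}` for `z ≥ q` and `s = {q ≤ η}` for `z < q` makes the right-hand side
nonnegative.
-/

section

variable {Ω : Type*} [Fintype Ω] (P : Ω → ℝ) (α : ℝ) (η : Ω → ℝ)

noncomputable def cdf (z : ℝ) : ℝ := ∑ ω ∈ univ.filter (fun ω => η ω ≤ z), P ω

noncomputable def ruObjective (z : ℝ) : ℝ := z + (1 / (1 - α)) * ∑ ω, P ω * max 0 (η ω - z)

variable {P α η}

theorem sum_max_sub_add_le_sum_max_sub (hP : ∀ ω, 0 ≤ P ω) {q : ℝ} (z : ℝ)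
    (p : Ω → Prop) [DecidablePred p] (hp_of_lt : ∀ ω, q < η ω → p ω)
    (hp_le : ∀ ω, p ω → q ≤ η ω) :
    ∑ ω, P ω * max 0 (η ω - q) + (q - z) * ∑ ω ∈ univ.filter p, P ω ≤
      ∑ ω, P ω * max 0 (η ω - z) := by
  rw [Finset.sum_filter, Finset.mul_sum, ← Finset.sum_add_distrib]
  refine Finset.sum_le_sum fun ω _ => ?_
  split_ifs with h
  · have hq : max 0 (η ω - q) = η ω - q := max_eq_right (by linarith [hp_le ω h])
    have hlin : P ω * (η ω - q) + (q - z) * P ω = P ω * (η ω - z) := by ring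
    rw [hq, hlin]
    exact mul_le_mul_of_nonneg_left (le_max_right _ _) (hP ω)
  · have hq : max 0 (η ω - q) = 0 := max_eq_left (by linarith [not_lt.mp (mt (hp_of_lt ω) h)])
    rw [hq, mul_zero, zero_add, mul_zero]
    exact mul_nonneg (hP ω) (le_max_left _ _)

theorem ruObjective_le_of_subgradient (hP : ∀ ω, 0 ≤ P ω) (hα : α < 1) {q z : ℝ}
    (p : Ω → Prop) [DecidablePred p] (hp_of_lt : ∀ ω, q < η ω → p ω)
    (hp_le : ∀ ω, p ω → q ≤ η ω) (hz : 0 ≤ (z - q) * (1 - α - ∑ ω ∈ univ.filter p, P ω)) :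
    ruObjective P α η q ≤ ruObjective P α η z := by
  have hc : 0 ≤ 1 / (1 - α) := (one_div_pos.mpr (sub_pos.mpr hα)).le
  have hsub := mul_le_mul_of_nonneg_left (sum_max_sub_add_le_sum_max_sub hP z p hp_of_lt hp_le) hc
  have hgap : (1 / (1 - α)) * ((z - q) * (1 - α - ∑ ω ∈ univ.filter p, P ω)) =
      (z - q) + (1 / (1 - α)) * ((q - z) * ∑ ω ∈ univ.filter p, P ω) := by
    field_simp [(sub_pos.mpr hα).ne']
    ring
  rw [mul_add] at hsub
  unfold ruObjective
  linarith [mul_nonneg hc hz]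

theorem ruObjective_le_of_quantile_bounds (hP : ∀ ω, 0 ≤ P ω) (hPsum : ∑ ω, P ω = 1)
    (hα : α < 1) {q : ℝ} (hlt : ∑ ω ∈ univ.filter (fun ω => η ω < q), P ω ≤ α)
    (hle : α ≤ cdf P η q) (z : ℝ) :
    ruObjective P α η q ≤ ruObjective P α η z := by
  rcases le_or_gt q z with hqz | hzq
  · refine ruObjective_le_of_subgradient hP hα (fun ω => ¬ η ω ≤ q)
      (fun ω h => not_le.mpr h) (fun ω h => (not_le.mp h).le) (mul_nonneg (sub_nonneg.mpr hqz) ?_)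
    have := Finset.sum_filter_add_sum_filter_not univ (fun ω => η ω ≤ q) P
    rw [hPsum] at this
    unfold cdf at hle
    linarith
  · refine ruObjective_le_of_subgradient hP hα (fun ω => ¬ η ω < q)
      (fun ω h => not_lt.mpr h.le) (fun ω h => not_lt.mp h)
      (mul_nonneg_of_nonpos_of_nonpos (sub_nonpos.mpr hzq.le) ?_)
    have := Finset.sum_filter_add_sum_filter_not univ (fun ω => η ω < q) P
    linarith

theorem exists_mem_sum_le_cdf (hP : ∀ ω, 0 ≤ P ω) {s : Finset Ω} (hs : s.Nonempty) :
    ∃ ω ∈ s, ∑ ω ∈ s, P ω ≤ cdf P η (η ω) := by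
  obtain ⟨ω', hω's, hmax⟩ := Finset.exists_max_image s η hs
  refine ⟨ω', hω's, Finset.sum_le_sum_of_subset_of_nonneg (fun ω hω => ?_) fun ω _ _ => hP ω⟩
  simpa using hmax ω hω

end

section

variable {Ω : Type} [Fintype Ω] {P : Ω → ℝ} {α : ℝ} {η : Ω → ℝ}

theorem exists_le_and_le_cdf_image (hP : ∀ ω, 0 ≤ P ω) (hα : 0 < α) {z : ℝ}
    (hz : α ≤ cdf P η z) : ∃ ω, η ω ≤ z ∧ α ≤ cdf P η (η ω) := by
  have hne : (univ.filter fun ω => η ω ≤ z).Nonempty :=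
    Finset.nonempty_of_sum_ne_zero (hα.trans_le hz).ne'
  obtain ⟨ω, hω, hle⟩ := exists_mem_sum_le_cdf hP hne
  exact ⟨ω, (Finset.mem_filter.mp hω).2, hz.trans hle⟩

theorem isLeast_quantile (hP : ∀ ω, 0 ≤ P ω) (hPsum : ∑ ω, P ω = 1) (hα0 : 0 < α)
    (hα1 : α ≤ 1) : IsLeast {z | α ≤ cdf P η z} (quantile P α η) := by
  obtain ⟨M, hM⟩ := (Set.finite_range η).bddAbove
  have hcdfM : α ≤ cdf P η M := by
    rwa [cdf, Finset.filter_true_of_mem fun ω _ => hM (Set.mem_range_self ω), hPsum]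
  obtain ⟨ω₁, -, hω₁⟩ := exists_le_and_le_cdf_image hP hα0 hcdfM
  obtain ⟨ω₀, hω₀, hmin⟩ := Finset.exists_min_image (univ.filter fun ω => α ≤ cdf P η (η ω)) η
    ⟨ω₁, Finset.mem_filter.mpr ⟨mem_univ _, hω₁⟩⟩
  -- `cdf` only jumps at values of `η`, so the infimum is attained at one of them.
  have hleast : IsLeast {z | α ≤ cdf P η z} (η ω₀) := by
    refine ⟨(Finset.mem_filter.mp hω₀).2, fun z hz => ?_⟩
    obtain ⟨ω, hωz, hω⟩ := exists_le_and_le_cdf_image hP hα0 hz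
    exact (hmin ω (Finset.mem_filter.mpr ⟨mem_univ _, hω⟩)).trans hωz
  have hq : quantile P α η = η ω₀ := hleast.csInf_eq
  rwa [hq]

theorem sum_lt_quantile_le (hP : ∀ ω, 0 ≤ P ω) (hPsum : ∑ ω, P ω = 1) (hα0 : 0 < α)
    (hα1 : α ≤ 1) : ∑ ω ∈ univ.filter (fun ω => η ω < quantile P α η), P ω ≤ α := by
  rcases (univ.filter fun ω => η ω < quantile P α η).eq_empty_or_nonempty with hs | hs
  · rw [hs, Finset.sum_empty]
    exact hα0.le
  obtain ⟨ω, hω, hle⟩ := exists_mem_sum_le_cdf hP hs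
  have hcdf : cdf P η (η ω) < α := not_le.mp fun h =>
    (Finset.mem_filter.mp hω).2.not_ge ((isLeast_quantile hP hPsum hα0 hα1).2 h)
  exact hle.trans hcdf.le

end

theorem rockafellar_uryasev_representation_general
    {Ω : Type} [Fintype Ω]
    (P : Ω → ℝ) (hP : ∀ ω, 0 < P ω) (hPsum : ∑ ω, P ω = 1)
    (α : ℝ) (hα0 : 0 < α) (hα1 : α < 1) (η : Ω → ℝ) :
    IsLeast
        {v : ℝ | ∃ z : ℝ, v = z + (1 / (1 - α)) * ∑ ω, P ω * max 0 (η ω - z)}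
        (superquantile P α η) ∧
      superquantile P α η =
        quantile P α η + (1 / (1 - α)) * ∑ ω, P ω * max 0 (η ω - quantile P α η) := by
  have hP' : ∀ ω, 0 ≤ P ω := fun ω => (hP ω).le
  refine ⟨⟨⟨quantile P α η, rfl⟩, ?_⟩, rfl⟩
  rintro _ ⟨z, rfl⟩
  exact ruObjective_le_of_quantile_bounds hP' hPsum hα1
    (sum_lt_quantile_le hP' hPsum hα0 hα1.le) (isLeast_quantile hP' hPsum hα0 hα1.le).1 z

/-- Rockafellar–Uryasev representation of the superquantile: the superquantile
is the minimum over `z` of `z + (1/(1-α)) Σ P(ω) max{0, η(ω) − z}`, attained at `z = Q_α(η)`. -/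
theorem rockafellar_uryasev_representation
    {Ω : Type} [Fintype Ω] [Nonempty Ω]
    (P : Ω → ℝ) (hP : ∀ ω, 0 < P ω) (hPsum : ∑ ω, P ω = 1)
    (α : ℝ) (hα0 : 0 < α) (hα1 : α < 1) (η : Ω → ℝ) :
    IsLeast
        {v : ℝ | ∃ z : ℝ, v = z + (1 / (1 - α)) * ∑ ω, P ω * max 0 (η ω - z)}
        (superquantile P α η) ∧
      superquantile P α η =
        quantile P α η + (1 / (1 - α)) * ∑ ω, P ω * max 0 (η ω - quantile P α η) :=
  rockafellar_uryasev_representation_general P hP hPsum α hα0 hα1 η
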